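/- Let p be prime, let m ≥ 2, let L be a linear factor on 𝔽_p^n of complexity ℓ, and let d = (a₁,a₂) ∈ 𝔽_p^ℓ × 𝔽_p^ℓ. Suppose that for each i ∈ [m] and S ⊆ [m], f_{i,S} : 𝔽_p^n → ℂ satisfies ‖f_{i,S}‖_∞ ≤ 1. Then |T_{m-IP(d)}((f_{i,S})_{i∈[m], S⊆[m]})| ≤ min_{i∈[m], S⊆[m]} ‖f_{i,S}‖_{U²(d)}. -/

import Mathlib

open scoped BigOperators Matrix

namespace TW

noncomputable section

/-- Normalized average of a complex-valued function over a finite set. -/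
def expC {α : Type*} (s : Finset α) (f : α → ℂ) : ℂ := (s.card : ℂ)⁻¹ * ∑ x ∈ s, f x

/-- Normalized average of a real-valued function over a finite set. -/
def expR {α : Type*} (s : Finset α) (f : α → ℝ) : ℝ := (s.card : ℝ)⁻¹ * ∑ x ∈ s, f x

/-- `k`-fold complex conjugation. -/
def cConj (k : ℕ) (z : ℂ) : ℂ := if k % 2 = 0 then z else (starRingEnd ℂ) z

/-- Select one of two elements according to a bit: `bsel false u v = u`, `bsel true u v = v`. -/
def bsel {α : Type*} (b : Bool) (u v : α) : α := if b then v else u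

/-- The number of ones in a boolean vector. -/
def wt {k : ℕ} (ω : Fin k → Bool) : ℕ := (Finset.univ.filter fun i => ω i = true).card

/-- The indicator function of a finite set, with values in `ℂ`. -/
def indC {α : Type*} [DecidableEq α] (A : Finset α) (x : α) : ℂ := if x ∈ A then 1 else 0

/-- The density `|A ∩ B| / |B|` of `A` on `B`. -/
def density {α : Type*} [DecidableEq α] (A B : Finset α) : ℝ :=
  ((A ∩ B).card : ℝ) / (B.card : ℝ)

/-- A growth function: an increasing positive function on `ℝ⁺`. -/
def GrowthFunction (σ : ℝ → ℝ) : Prop :=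
  (∀ x : ℝ, 0 < x → 0 < σ x) ∧ ∀ x y : ℝ, 0 < x → x ≤ y → σ x ≤ σ y

/-- A polynomial growth function: a growth function bounded above by a polynomial on `ℝ⁺`. -/
def PolyGrowthFunction (σ : ℝ → ℝ) : Prop :=
  GrowthFunction σ ∧ ∃ P : Polynomial ℝ, ∀ x : ℝ, 0 < x → σ x ≤ P.eval x

/-- `A ⊆ G` has the `m`-independence property (i.e. `VC`-dimension at least `m`). -/
def HasIP {G : Type*} [AddCommGroup G] (A : Set G) (m : ℕ) : Prop :=
  ∃ (a : Fin m → G) (b : Finset (Fin m) → G),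
    ∀ (i : Fin m) (S : Finset (Fin m)), a i + b S ∈ A ↔ i ∈ S

/-- `A ⊆ G` has the `m`-`IP₂` property (i.e. `VC₂`-dimension at least `m`). -/
def HasIP2 {G : Type*} [AddCommGroup G] (A : Set G) (m : ℕ) : Prop :=
  ∃ (a b : Fin m → G) (c : Finset (Fin m × Fin m) → G),
    ∀ (i j : Fin m) (S : Finset (Fin m × Fin m)), a i + b j + c S ∈ A ↔ (i, j) ∈ S

variable {p : ℕ}

/-- The atom of the linear factor `L` labelled by `a`. -/
def linAtom [NeZero p] {n ℓ : ℕ} (L : Fin ℓ → (Fin n → ZMod p)) (a : Fin ℓ → ZMod p) :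
    Finset (Fin n → ZMod p) :=
  Finset.univ.filter fun x => ∀ i, x ⬝ᵥ L i = a i

/-- A quadratic factor on `𝔽_p^n` of complexity `(ℓ, q)`: `ℓ` linearly independent vectors
together with `q` symmetric `n × n` matrices over `𝔽_p`. -/
structure QuadFactor (p n ℓ q : ℕ) where
  L : Fin ℓ → (Fin n → ZMod p)
  M : Fin q → Matrix (Fin n) (Fin n) (ZMod p)
  indep : LinearIndependent (ZMod p) L
  symm : ∀ j, (M j).IsSymm

/-- The atom of a quadratic factor labelled by `a = (linear label, quadratic label)`. -/
def qAtom [NeZero p] {n ℓ q : ℕ} (F : QuadFactor p n ℓ q)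
    (a : (Fin ℓ → ZMod p) × (Fin q → ZMod p)) : Finset (Fin n → ZMod p) :=
  Finset.univ.filter fun x =>
    (∀ i, x ⬝ᵥ F.L i = a.1 i) ∧ ∀ j, x ⬝ᵥ (F.M j *ᵥ x) = a.2 j

/-- The set of (nonempty) atoms of a quadratic factor. -/
def atoms [NeZero p] {n ℓ q : ℕ} (F : QuadFactor p n ℓ q) :
    Finset (Finset (Fin n → ZMod p)) :=
  ((Finset.univ : Finset ((Fin ℓ → ZMod p) × (Fin q → ZMod p))).image fun a => qAtom F a).filter
    fun B => B.Nonempty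

/-- The quadratic factor `F` has rank at least `r`: every nontrivial linear combination of its
matrices has rank at least `r`. -/
def rankGe {n ℓ q : ℕ} (F : QuadFactor p n ℓ q) (r : ℝ) : Prop :=
  ∀ lam : Fin q → ZMod p, lam ≠ 0 → r ≤ ((∑ j, lam j • F.M j).rank : ℝ)

/-- The bilinear level set `β(b)`. -/
def bilinSet [NeZero p] {n q : ℕ} (M : Fin q → Matrix (Fin n) (Fin n) (ZMod p))
    (b : Fin q → ZMod p) : Finset ((Fin n → ZMod p) × (Fin n → ZMod p)) :=
  Finset.univ.filter fun xy => ∀ j, xy.1 ⬝ᵥ (M j *ᵥ xy.2) = b j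

/-- The characteristic measure `μ_{β(b)}` of a bilinear level set. -/
def bmu [NeZero p] {n q : ℕ} (M : Fin q → Matrix (Fin n) (Fin n) (ZMod p))
    (b : Fin q → ZMod p) (x y : Fin n → ZMod p) : ℝ :=
  if (x, y) ∈ bilinSet M b then ((p : ℝ) ^ (2 * n)) / ((bilinSet M b).card : ℝ) else 0

/-- The label `Σ(d)` of the atom on which the local `U³` inner product evaluates its inputs. -/
def sigmaLabel {p : ℕ} {ℓ q : ℕ} (a₁ a₂ a₃ : (Fin ℓ → ZMod p) × (Fin q → ZMod p))
    (b₁₂ b₁₃ b₂₃ : Fin q → ZMod p) : (Fin ℓ → ZMod p) × (Fin q → ZMod p) :=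
  (a₁.1 + a₂.1 + a₃.1, a₁.2 + a₂.2 + a₃.2 + 2 • (b₁₂ + b₁₃ + b₂₃))

/-- The local `U²` inner product relative to the atoms `L(a₁)`, `L(a₂)`. -/
def localU2Inner [NeZero p] {n ℓ : ℕ} (L : Fin ℓ → (Fin n → ZMod p)) (a₁ a₂ : Fin ℓ → ZMod p)
    (f : (Fin 2 → Bool) → (Fin n → ZMod p) → ℂ) : ℂ :=
  expC (linAtom L a₁) fun x₀ => expC (linAtom L a₁) fun x₁ =>
  expC (linAtom L a₂) fun y₀ => expC (linAtom L a₂) fun y₁ =>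
  ∏ ε : Fin 2 → Bool, cConj (wt ε) (f ε (bsel (ε 0) x₀ x₁ + bsel (ε 1) y₀ y₁))

/-- The local `U²` semi-norm. -/
def localU2Norm [NeZero p] {n ℓ : ℕ} (L : Fin ℓ → (Fin n → ZMod p)) (a₁ a₂ : Fin ℓ → ZMod p)
    (f : (Fin n → ZMod p) → ℂ) : ℝ :=
  (localU2Inner L a₁ a₂ fun _ => f).re ^ ((1 : ℝ) / 4)

/-- The (global) `U²` inner product on `𝔽_p^n`. -/
def U2Inner [NeZero p] {n : ℕ} (f : (Fin 2 → Bool) → (Fin n → ZMod p) → ℂ) : ℂ :=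
  expC (Finset.univ : Finset (Fin n → ZMod p)) fun x₀ =>
  expC (Finset.univ : Finset (Fin n → ZMod p)) fun x₁ =>
  expC (Finset.univ : Finset (Fin n → ZMod p)) fun y₀ =>
  expC (Finset.univ : Finset (Fin n → ZMod p)) fun y₁ =>
  ∏ ε : Fin 2 → Bool, cConj (wt ε) (f ε (bsel (ε 0) x₀ x₁ + bsel (ε 1) y₀ y₁))

/-- The Gowers `U²` norm on `𝔽_p^n`. -/
def U2Norm [NeZero p] {n : ℕ} (f : (Fin n → ZMod p) → ℂ) : ℝ :=
  (U2Inner fun _ => f).re ^ ((1 : ℝ) / 4)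

/-- The (global) `U³` inner product on `𝔽_p^n`. -/
def U3Inner [NeZero p] {n : ℕ} (f : (Fin 3 → Bool) → (Fin n → ZMod p) → ℂ) : ℂ :=
  expC (Finset.univ : Finset (Fin n → ZMod p)) fun x₀ =>
  expC (Finset.univ : Finset (Fin n → ZMod p)) fun x₁ =>
  expC (Finset.univ : Finset (Fin n → ZMod p)) fun y₀ =>
  expC (Finset.univ : Finset (Fin n → ZMod p)) fun y₁ =>
  expC (Finset.univ : Finset (Fin n → ZMod p)) fun z₀ =>
  expC (Finset.univ : Finset (Fin n → ZMod p)) fun z₁ =>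
  ∏ ω : Fin 3 → Bool,
    cConj (wt ω) (f ω (bsel (ω 0) x₀ x₁ + bsel (ω 1) y₀ y₁ + bsel (ω 2) z₀ z₁))

/-- The Gowers `U³` norm on `𝔽_p^n`. -/
def U3Norm [NeZero p] {n : ℕ} (f : (Fin n → ZMod p) → ℂ) : ℝ :=
  (U3Inner fun _ => f).re ^ ((1 : ℝ) / 8)

/-- The local `U³` inner product relative to a quadratic factor, with label tuple
`d = (a₁, a₂, a₃, b₁₂, b₁₃, b₂₃)`. -/
def localU3Inner [NeZero p] {n ℓ q : ℕ} (F : QuadFactor p n ℓ q)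
    (a₁ a₂ a₃ : (Fin ℓ → ZMod p) × (Fin q → ZMod p)) (b₁₂ b₁₃ b₂₃ : Fin q → ZMod p)
    (f : (Fin 3 → Bool) → (Fin n → ZMod p) → ℂ) : ℂ :=
  expC (qAtom F a₁) fun x₀ => expC (qAtom F a₁) fun x₁ =>
  expC (qAtom F a₂) fun y₀ => expC (qAtom F a₂) fun y₁ =>
  expC (qAtom F a₃) fun z₀ => expC (qAtom F a₃) fun z₁ =>
  (∏ ij : Bool × Bool, (bmu F.M b₁₂ (bsel ij.1 x₀ x₁) (bsel ij.2 y₀ y₁) : ℂ)) *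
  (∏ ik : Bool × Bool, (bmu F.M b₁₃ (bsel ik.1 x₀ x₁) (bsel ik.2 z₀ z₁) : ℂ)) *
  (∏ jk : Bool × Bool, (bmu F.M b₂₃ (bsel jk.1 y₀ y₁) (bsel jk.2 z₀ z₁) : ℂ)) *
  ∏ ω : Fin 3 → Bool,
    cConj (wt ω) (f ω (bsel (ω 0) x₀ x₁ + bsel (ω 1) y₀ y₁ + bsel (ω 2) z₀ z₁))

/-- The local `U³` semi-norm. -/
def localU3Norm [NeZero p] {n ℓ q : ℕ} (F : QuadFactor p n ℓ q)
    (a₁ a₂ a₃ : (Fin ℓ → ZMod p) × (Fin q → ZMod p)) (b₁₂ b₁₃ b₂₃ : Fin q → ZMod p)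
    (f : (Fin n → ZMod p) → ℂ) : ℝ :=
  (localU3Inner F a₁ a₂ a₃ b₁₂ b₁₃ b₂₃ fun _ => f).re ^ ((1 : ℝ) / 8)

/-- The `m`-`IP` operator. -/
def IPop [NeZero p] {n : ℕ} (m : ℕ) (f : Fin m → Finset (Fin m) → (Fin n → ZMod p) → ℂ) : ℂ :=
  expC (Finset.univ : Finset (Fin m → Fin n → ZMod p)) fun x =>
  expC (Finset.univ : Finset (Finset (Fin m) → Fin n → ZMod p)) fun y =>
  ∏ i, ∏ S, f i S (x i + y S)

/-- The `m`-`IP₂` operator. -/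
def IP2op [NeZero p] {n : ℕ} (m : ℕ)
    (f : Fin m → Fin m → Finset (Fin m × Fin m) → (Fin n → ZMod p) → ℂ) : ℂ :=
  expC (Finset.univ : Finset (Fin m → Fin n → ZMod p)) fun x =>
  expC (Finset.univ : Finset (Fin m → Fin n → ZMod p)) fun y =>
  expC (Finset.univ : Finset (Finset (Fin m × Fin m) → Fin n → ZMod p)) fun z =>
  ∏ i, ∏ j, ∏ S, f i j S (x i + y j + z S)

/-- The local `m`-`IP` operator relative to the atoms `L(a₁)`, `L(a₂)`. -/
def localIPop [NeZero p] {n ℓ : ℕ} (m : ℕ) (L : Fin ℓ → (Fin n → ZMod p))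
    (a₁ a₂ : Fin ℓ → ZMod p) (f : Fin m → Finset (Fin m) → (Fin n → ZMod p) → ℂ) : ℂ :=
  expC (Fintype.piFinset fun _ : Fin m => linAtom L a₁) fun x =>
  expC (Fintype.piFinset fun _ : Finset (Fin m) => linAtom L a₂) fun y =>
  ∏ i, ∏ S, f i S (x i + y S)

/-- The local `m`-`IP₂` operator relative to a quadratic factor with label tuple `d`. -/
def localIP2op [NeZero p] {n ℓ q : ℕ} (m : ℕ) (F : QuadFactor p n ℓ q)
    (a₁ a₂ a₃ : (Fin ℓ → ZMod p) × (Fin q → ZMod p)) (b₁₂ b₁₃ b₂₃ : Fin q → ZMod p)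
    (f : Fin m → Fin m → Finset (Fin m × Fin m) → (Fin n → ZMod p) → ℂ) : ℂ :=
  expC (Fintype.piFinset fun _ : Fin m => qAtom F a₁) fun x =>
  expC (Fintype.piFinset fun _ : Fin m => qAtom F a₂) fun y =>
  expC (Fintype.piFinset fun _ : Finset (Fin m × Fin m) => qAtom F a₃) fun z =>
    (∏ i, ∏ j, (bmu F.M b₁₂ (x i) (y j) : ℂ)) *
    (∏ i, ∏ S, (bmu F.M b₁₃ (x i) (z S) : ℂ)) *
    (∏ j, ∏ S, (bmu F.M b₂₃ (y j) (z S) : ℂ)) *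
    ∏ i, ∏ j, ∏ S, f i j S (x i + y j + z S)

/-- The ternary multi-local `F`-operator, for a `3`-partite `3`-uniform hypergraph with parts
`U`, `V`, `W` and label tuples `e_{uvw} = (a u, b v, c w, d₁₂ u v, d₁₃ u w, d₂₃ v w)`. -/
def TFop [NeZero p] {n ℓ q m : ℕ} (F : QuadFactor p n ℓ q) (U V W : Finset (Fin m))
    (a b c : Fin m → (Fin ℓ → ZMod p) × (Fin q → ZMod p))
    (d₁₂ d₁₃ d₂₃ : Fin m → Fin m → (Fin q → ZMod p))
    (g : Fin m → Fin m → Fin m → (Fin n → ZMod p) → ℂ) : ℂ :=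
  expC (Fintype.piFinset fun u : {u // u ∈ U} => qAtom F (a u.1)) fun x =>
  expC (Fintype.piFinset fun v : {v // v ∈ V} => qAtom F (b v.1)) fun y =>
  expC (Fintype.piFinset fun w : {w // w ∈ W} => qAtom F (c w.1)) fun z =>
    (∏ u, ∏ v, (bmu F.M (d₁₂ u.1 v.1) (x u) (y v) : ℂ)) *
    (∏ u, ∏ w, (bmu F.M (d₁₃ u.1 w.1) (x u) (z w) : ℂ)) *
    (∏ v, ∏ w, (bmu F.M (d₂₃ v.1 w.1) (y v) (z w) : ℂ)) *
    ∏ u, ∏ v, ∏ w, g u.1 v.1 w.1 (x u + y v + z w)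

end

section AuxHelpers

open Finset

variable {α β : Type*}

private lemma expC_congr {s : Finset α} {f g : α → ℂ} (h : ∀ x ∈ s, f x = g x) :
    expC s f = expC s g := by
  unfold expC; rw [Finset.sum_congr rfl h]

private lemma expC_const_mul (s : Finset α) (c : ℂ) (f : α → ℂ) :
    expC s (fun x => c * f x) = c * expC s f := by
  unfold expC
  rw [← Finset.mul_sum]
  ring

private lemma expC_mul_const (s : Finset α) (c : ℂ) (f : α → ℂ) :
    expC s (fun x => f x * c) = expC s f * c := by
  have : (fun x => f x * c) = fun x => c * f x := by funext x; ring
  rw [this, expC_const_mul]; ring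

private lemma expC_comm (s : Finset α) (t : Finset β) (F : α → β → ℂ) :
    expC s (fun a => expC t fun b => F a b) = expC t (fun b => expC s fun a => F a b) := by
  unfold expC
  rw [← Finset.mul_sum, ← Finset.mul_sum, Finset.sum_comm]
  ring

private lemma conj_expC (s : Finset α) (f : α → ℂ) :
    (starRingEnd ℂ) (expC s f) = expC s fun x => (starRingEnd ℂ) (f x) := by
  unfold expC
  rw [map_mul, map_inv₀, map_sum, Complex.conj_natCast]

private lemma expC_re (s : Finset α) (F : α → ℂ) :
    (expC s F).re = expR s fun x => (F x).re := by
  unfold expC expR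
  have h : ((s.card : ℂ))⁻¹ = Complex.ofReal ((s.card : ℝ))⁻¹ := by push_cast; ring
  rw [h, Complex.re_ofReal_mul, Complex.re_sum]

private lemma norm_expC_le (s : Finset α) (f : α → ℂ) :
    ‖expC s f‖ ≤ expR s fun x => ‖f x‖ := by
  unfold expC expR
  rw [norm_mul]
  have h1 : ‖((s.card : ℂ))⁻¹‖ = ((s.card : ℝ))⁻¹ := by
    rw [norm_inv]; norm_num
  rw [h1]
  exact mul_le_mul_of_nonneg_left (norm_sum_le _ _) (by positivity)

private lemma expR_mono {s : Finset α} {f g : α → ℝ} (h : ∀ x ∈ s, f x ≤ g x) :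
    expR s f ≤ expR s g :=
  mul_le_mul_of_nonneg_left (Finset.sum_le_sum h) (by positivity)

private lemma expR_le_const {s : Finset α} {f : α → ℝ} {c : ℝ} (hc : 0 ≤ c)
    (h : ∀ x ∈ s, f x ≤ c) : expR s f ≤ c := by
  rcases s.eq_empty_or_nonempty with rfl | hs
  · simpa [expR] using hc
  calc expR s f ≤ expR s fun _ => c := expR_mono h
    _ = c := by
        unfold expR
        rw [Finset.sum_const, nsmul_eq_mul, ← mul_assoc,
          inv_mul_cancel₀ (by exact_mod_cast hs.card_pos.ne'), one_mul]

private lemma expR_const {s : Finset α} (hs : s.Nonempty) (c : ℝ) :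
    expR s (fun _ => c) = c := by
  unfold expR
  rw [Finset.sum_const, nsmul_eq_mul, ← mul_assoc,
    inv_mul_cancel₀ (by exact_mod_cast hs.card_pos.ne'), one_mul]

private lemma sq_expR_le (s : Finset α) (f : α → ℝ) :
    expR s f ^ 2 ≤ expR s fun x => f x ^ 2 := by
  rcases s.eq_empty_or_nonempty with rfl | hs
  · simp [expR]
  have hc : (0:ℝ) < s.card := by exact_mod_cast hs.card_pos
  unfold expR
  rw [mul_pow]
  have h2 : (∑ x ∈ s, f x) ^ 2 ≤ (s.card : ℝ) * ∑ x ∈ s, f x ^ 2 := by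
    exact_mod_cast sq_sum_le_card_mul_sum_sq (s := s) (f := f)
  calc ((s.card:ℝ))⁻¹ ^ 2 * (∑ x ∈ s, f x) ^ 2
      ≤ ((s.card:ℝ))⁻¹ ^ 2 * ((s.card:ℝ) * ∑ x ∈ s, f x ^ 2) :=
        mul_le_mul_of_nonneg_left h2 (by positivity)
    _ = ((s.card:ℝ))⁻¹ * ∑ x ∈ s, f x ^ 2 := by field_simp

private lemma expC_mul_expC (s : Finset α) (t : Finset β) (f : α → ℂ) (g : β → ℂ) :
    expC s f * expC t g = expC s fun a => expC t fun b => f a * g b := by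
  have : (fun a => expC t fun b => f a * g b) = fun a => f a * expC t g := by
    funext a; exact expC_const_mul t (f a) g
  rw [this, expC_mul_const]

private lemma expC_piFinset_update {ι G : Type*} [Fintype ι] [DecidableEq ι] [DecidableEq G]
    (A : Finset G) (i₀ : ι) (g : (ι → G) → ℂ) :
    expC (Fintype.piFinset fun _ : ι => A) g
      = expC (Fintype.piFinset fun _ : ι => A) fun x =>
          expC A fun u => g (Function.update x i₀ u) := by
  rcases A.eq_empty_or_nonempty with rfl | hA
  · have : (Fintype.piFinset fun _ : ι => (∅ : Finset G)) = ∅ := by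
      rw [Finset.eq_empty_iff_forall_notMem]
      intro x hx
      exact absurd (Fintype.mem_piFinset.1 hx i₀) (Finset.notMem_empty _)
    simp [this, expC]
  have key : ∑ x ∈ Fintype.piFinset (fun _ : ι => A), ∑ u ∈ A, g (Function.update x i₀ u)
      = (A.card : ℂ) * ∑ x ∈ Fintype.piFinset (fun _ : ι => A), g x := by
    rw [← Finset.sum_product']
    rw [show (A.card : ℂ) * ∑ x ∈ Fintype.piFinset (fun _ : ι => A), g x
        = ∑ p ∈ (Fintype.piFinset fun _ : ι => A) ×ˢ A, g p.1 by
      rw [Finset.sum_product]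
      simp [Finset.sum_const, mul_comm, Finset.mul_sum]]
    refine Finset.sum_nbij' (fun p => (Function.update p.1 i₀ p.2, p.1 i₀))
      (fun p => (Function.update p.1 i₀ p.2, p.1 i₀)) ?_ ?_ ?_ ?_ ?_
    · rintro ⟨x, u⟩ h
      rw [Finset.mem_product] at h ⊢
      obtain ⟨hx, hu⟩ := h
      rw [Fintype.mem_piFinset] at hx
      refine ⟨Fintype.mem_piFinset.2 fun j => ?_, hx i₀⟩
      rcases eq_or_ne j i₀ with rfl | hj
      · simpa using hu
      · simpa [Function.update_of_ne hj] using hx j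
    · rintro ⟨x, u⟩ h
      rw [Finset.mem_product] at h ⊢
      obtain ⟨hx, hu⟩ := h
      rw [Fintype.mem_piFinset] at hx
      refine ⟨Fintype.mem_piFinset.2 fun j => ?_, hx i₀⟩
      rcases eq_or_ne j i₀ with rfl | hj
      · simpa using hu
      · simpa [Function.update_of_ne hj] using hx j
    · rintro ⟨x, u⟩ _
      simp [Function.update_idem, Function.update_self, Function.update_eq_self]
    · rintro ⟨x, u⟩ _
      simp [Function.update_idem, Function.update_self, Function.update_eq_self]
    · rintro ⟨x, u⟩ _
      rfl
  unfold expC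
  rw [← Finset.mul_sum, key]
  have hAc : ((A.card : ℂ)) ≠ 0 := by exact_mod_cast Nat.cast_ne_zero.2 hA.card_pos.ne'
  rw [← mul_assoc ((A.card : ℂ))⁻¹, inv_mul_cancel₀ hAc, one_mul]

private lemma norm_sq_conj (z : ℂ) : ‖z‖ ^ 2 = (z * (starRingEnd ℂ) z).re := by
  rw [Complex.mul_conj, Complex.ofReal_re, Complex.sq_norm]

/-- The explicit 4-term form of the local `U²` box average. -/
private noncomputable def box {G : Type*} [AddCommGroup G] (A B : Finset G) (f : G → ℂ) : ℂ :=
  expC A fun x₀ => expC A fun x₁ => expC B fun y₀ => expC B fun y₁ =>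
    f (x₀ + y₀) * (starRingEnd ℂ) (f (x₁ + y₀)) *
      ((starRingEnd ℂ) (f (x₀ + y₁)) * f (x₁ + y₁))

set_option maxRecDepth 20000 in
private lemma prod_fin2_bool (F : (Fin 2 → Bool) → ℂ) :
    ∏ ε : Fin 2 → Bool, F ε
      = F ![false, false] * F ![true, false] * (F ![false, true] * F ![true, true]) := by
  rw [show (Finset.univ : Finset (Fin 2 → Bool))
      = {![false, false], ![true, false], ![false, true], ![true, true]} from by decide]
  rw [Finset.prod_insert (by decide), Finset.prod_insert (by decide),
    Finset.prod_insert (by decide), Finset.prod_singleton]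
  ring

set_option maxRecDepth 20000 in
private lemma localU2Inner_eq_box {p : ℕ} [NeZero p] {n ℓ : ℕ}
    (L : Fin ℓ → (Fin n → ZMod p)) (a₁ a₂ : Fin ℓ → ZMod p) (f : (Fin n → ZMod p) → ℂ) :
    localU2Inner L a₁ a₂ (fun _ => f) = box (linAtom L a₁) (linAtom L a₂) f := by
  unfold localU2Inner box
  refine expC_congr fun x₀ _ => expC_congr fun x₁ _ => expC_congr fun y₀ _ =>
    expC_congr fun y₁ _ => ?_
  rw [prod_fin2_bool]
  have hwt00 : wt ![false, false] = 0 := by decide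
  have hwt10 : wt ![true, false] = 1 := by decide
  have hwt01 : wt ![false, true] = 1 := by decide
  have hwt11 : wt ![true, true] = 2 := by decide
  rw [hwt00, hwt10, hwt01, hwt11]
  simp [cConj, bsel]

private lemma box_re_key {G : Type*} [AddCommGroup G] (A B : Finset G) (f g h : G → ℂ)
    (hg : ∀ u, ‖g u‖ ≤ 1) (hh : ∀ v, ‖h v‖ ≤ 1) :
    ‖expC A fun u => expC B fun v => f (u + v) * g u * h v‖ ^ 4 ≤ (box A B f).re := by
  classical
  set c := starRingEnd ℂ with hc
  -- Step 0: swap the averages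
  set Ψ : G → ℂ := fun v => expC A fun u => f (u + v) * g u with hΨ
  have h0 : (expC A fun u => expC B fun v => f (u + v) * g u * h v)
      = expC B fun v => h v * Ψ v := by
    rw [expC_comm]
    refine expC_congr fun v _ => ?_
    rw [hΨ]
    rw [show (fun u => f (u + v) * g u * h v) = fun u => h v * (f (u + v) * g u) by
      funext u; ring]
    rw [expC_const_mul]
  -- Step 1: ‖I‖ ≤ E_v ‖Ψ v‖
  have h1 : ‖expC A fun u => expC B fun v => f (u + v) * g u * h v‖
      ≤ expR B fun v => ‖Ψ v‖ := by
    rw [h0]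
    refine (norm_expC_le _ _).trans (expR_mono fun v _ => ?_)
    rw [norm_mul]
    calc ‖h v‖ * ‖Ψ v‖ ≤ 1 * ‖Ψ v‖ := by
          exact mul_le_mul_of_nonneg_right (hh v) (norm_nonneg _)
      _ = ‖Ψ v‖ := one_mul _
  -- Step 2: define K and bound E_v ‖Ψ v‖² ≤ E_u E_u' ‖K u u'‖
  set K : G → G → ℂ := fun u u' => expC B fun v => f (u + v) * c (f (u' + v)) with hK
  have h2 : (expR B fun v => ‖Ψ v‖ ^ 2)
      ≤ expR A fun u => expR A fun u' => ‖K u u'‖ := by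
    have e1 : (expR B fun v => ‖Ψ v‖ ^ 2)
        = (expC B fun v => expC A fun u => expC A fun u' =>
            (f (u + v) * g u) * c (f (u' + v) * g u')).re := by
      rw [expC_re]
      refine congrArg _ (funext fun v => ?_)
      rw [show ‖Ψ v‖ ^ 2 = (Ψ v * c (Ψ v)).re by rw [hc]; exact norm_sq_conj _]
      congr 1
      rw [hΨ, hc, conj_expC, expC_mul_expC]
    have e2 : (expC B fun v => expC A fun u => expC A fun u' =>
            (f (u + v) * g u) * c (f (u' + v) * g u'))
        = expC A fun u => expC A fun u' => (g u * c (g u')) * K u u' := by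
      rw [expC_comm]
      refine expC_congr fun u _ => ?_
      rw [expC_comm]
      refine expC_congr fun u' _ => ?_
      rw [hK]
      rw [show (fun v => (f (u + v) * g u) * c (f (u' + v) * g u'))
          = fun v => (g u * c (g u')) * (f (u + v) * c (f (u' + v))) by
        funext v; rw [hc, map_mul]; ring]
      rw [expC_const_mul]
    rw [e1, e2, expC_re]
    refine expR_mono fun u _ => ?_
    rw [expC_re]
    refine (expR_mono fun u' _ => (Complex.re_le_norm _).trans ?_)
    rw [norm_mul, norm_mul, hc, RCLike.norm_conj]
    calc ‖g u‖ * ‖g u'‖ * ‖K u u'‖ ≤ 1 * 1 * ‖K u u'‖ := by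
          apply mul_le_mul_of_nonneg_right _ (norm_nonneg _)
          exact mul_le_mul (hg u) (hg u') (norm_nonneg _) zero_le_one
      _ = ‖K u u'‖ := by ring
  -- Step 3: E_u E_u' ‖K u u'‖² = box.re
  have h3 : (expR A fun u => expR A fun u' => ‖K u u'‖ ^ 2) = (box A B f).re := by
    unfold box
    rw [expC_re]
    refine congrArg _ (funext fun u => ?_)
    rw [expC_re]
    refine congrArg _ (funext fun u' => ?_)
    rw [show ‖K u u'‖ ^ 2 = (K u u' * c (K u u')).re by rw [hc]; exact norm_sq_conj _]
    congr 1
    rw [hK, hc, conj_expC, expC_mul_expC]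
    refine expC_congr fun y₀ _ => expC_congr fun y₁ _ => ?_
    rw [map_mul, Complex.conj_conj]

  -- assemble
  have hI1 := h1
  have hnn : (0:ℝ) ≤ expR B fun v => ‖Ψ v‖ :=
    le_trans (norm_nonneg _) h1
  have step : ‖expC A fun u => expC B fun v => f (u + v) * g u * h v‖ ^ 2
      ≤ expR A fun u => expR A fun u' => ‖K u u'‖ := by
    calc ‖expC A fun u => expC B fun v => f (u + v) * g u * h v‖ ^ 2
        ≤ (expR B fun v => ‖Ψ v‖) ^ 2 := by
          exact pow_le_pow_left₀ (norm_nonneg _) h1 2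
      _ ≤ expR B fun v => ‖Ψ v‖ ^ 2 := sq_expR_le _ _
      _ ≤ _ := h2
  have hstepnn : (0:ℝ) ≤ ‖expC A fun u => expC B fun v => f (u + v) * g u * h v‖ ^ 2 := by
    positivity
  calc ‖expC A fun u => expC B fun v => f (u + v) * g u * h v‖ ^ 4
      = (‖expC A fun u => expC B fun v => f (u + v) * g u * h v‖ ^ 2) ^ 2 := by ring
    _ ≤ (expR A fun u => expR A fun u' => ‖K u u'‖) ^ 2 :=
        pow_le_pow_left₀ hstepnn step 2
    _ ≤ expR A fun u => (expR A fun u' => ‖K u u'‖) ^ 2 := sq_expR_le _ _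
    _ ≤ expR A fun u => expR A fun u' => ‖K u u'‖ ^ 2 :=
        expR_mono fun u _ => sq_expR_le _ _
    _ = (box A B f).re := h3

private lemma box_re_nonneg {G : Type*} [AddCommGroup G] (A B : Finset G) (f : G → ℂ) :
    0 ≤ (box A B f).re := by
  have := box_re_key A B f (fun _ => 1) (fun _ => 1)
    (fun _ => by norm_num) (fun _ => by norm_num)
  exact le_trans (by positivity) this

private lemma norm_le_box_rpow {G : Type*} [AddCommGroup G] (A B : Finset G) (f g h : G → ℂ)
    (hg : ∀ u, ‖g u‖ ≤ 1) (hh : ∀ v, ‖h v‖ ≤ 1) :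
    ‖expC A fun u => expC B fun v => f (u + v) * g u * h v‖
      ≤ (box A B f).re ^ ((1:ℝ) / 4) := by
  have key := box_re_key A B f g h hg hh
  set I := ‖expC A fun u => expC B fun v => f (u + v) * g u * h v‖ with hI
  have hInn : 0 ≤ I := norm_nonneg _
  have : I = (I ^ (4:ℕ)) ^ ((1:ℝ) / 4) := by
    rw [← Real.rpow_natCast I 4, ← Real.rpow_mul hInn]
    norm_num
  rw [this]
  exact Real.rpow_le_rpow (by positivity) key (by norm_num)

private lemma linAtom_nonempty {p n ℓ : ℕ} [NeZero p] [Fact p.Prime]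
    {L : Fin ℓ → (Fin n → ZMod p)} (hL : LinearIndependent (ZMod p) L)
    (a : Fin ℓ → ZMod p) : (linAtom L a).Nonempty := by
  classical
  set M : Matrix (Fin ℓ) (Fin n) (ZMod p) := Matrix.of L with hM
  have hinj : Function.Injective Mᵀ.mulVecLin := by
    rw [Matrix.mulVecLin_transpose]
    show Function.Injective M.vecMulLinear
    rw [show ⇑M.vecMulLinear = M.vecMul from funext fun x => rfl]
    exact Matrix.vecMul_injective_iff.mpr hL
  have hsurj : Function.Surjective M.mulVecLin := by
    rw [← LinearMap.range_eq_top]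
    apply Submodule.eq_top_of_finrank_eq
    have h1 : Module.finrank (ZMod p) (LinearMap.range M.mulVecLin) = M.rank := rfl
    have h2 : Mᵀ.rank = ℓ := by
      have := LinearMap.finrank_range_of_inj hinj
      rw [Matrix.rank, this, Module.finrank_fintype_fun_eq_card, Fintype.card_fin]
    rw [h1, ← Matrix.rank_transpose, h2, Module.finrank_fintype_fun_eq_card, Fintype.card_fin]
  obtain ⟨x, hx⟩ := hsurj a
  refine ⟨x, ?_⟩
  rw [linAtom, Finset.mem_filter]
  refine ⟨Finset.mem_univ x, fun i => ?_⟩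
  have h2 : (M *ᵥ x) i = a i := by
    have := congr_fun hx i
    rwa [Matrix.mulVecLin_apply] at this
  rw [← h2, dotProduct_comm]
  rfl

end AuxHelpers

/-- Local `IP` is controlled by local `U²`. -/
theorem statement9 (p : ℕ) [NeZero p] (hp : p.Prime) (n ℓ m : ℕ) (hm : 2 ≤ m)
    (L : Fin ℓ → (Fin n → ZMod p)) (hL : LinearIndependent (ZMod p) L)
    (a₁ a₂ : Fin ℓ → ZMod p)
    (f : Fin m → Finset (Fin m) → (Fin n → ZMod p) → ℂ)
    (hf : ∀ (i : Fin m) (S : Finset (Fin m)) (x : Fin n → ZMod p), ‖f i S x‖ ≤ 1) :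
    ∀ (i : Fin m) (S : Finset (Fin m)),
      ‖localIPop m L a₁ a₂ f‖ ≤ localU2Norm L a₁ a₂ (f i S) := by
  intro i₀ S₀
  haveI := Fact.mk hp
  classical
  set A := linAtom L a₁ with hA
  set B := linAtom L a₂ with hB
  set N := localU2Norm L a₁ a₂ (f i₀ S₀) with hN
  have hNval : N = (box A B (f i₀ S₀)).re ^ ((1:ℝ)/4) := by
    rw [hN, localU2Norm, localU2Inner_eq_box]
  have hN0 : 0 ≤ N := by
    rw [hNval]; exact Real.rpow_nonneg (box_re_nonneg _ _ _) _
  have key : localIPop m L a₁ a₂ f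
      = expC (Fintype.piFinset fun _ : Fin m => A) fun x =>
          expC (Fintype.piFinset fun _ : Finset (Fin m) => B) fun y =>
            expC A fun u => expC B fun v =>
              ∏ i, ∏ S, f i S (Function.update x i₀ u i + Function.update y S₀ v S) := by
    calc localIPop m L a₁ a₂ f
        = expC (Fintype.piFinset fun _ : Fin m => A) fun x =>
            expC (Fintype.piFinset fun _ : Finset (Fin m) => B) fun y =>
              ∏ i, ∏ S, f i S (x i + y S) := rfl
      _ = expC (Fintype.piFinset fun _ : Fin m => A) fun x =>
            expC (Fintype.piFinset fun _ : Finset (Fin m) => B) fun y =>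
              expC B fun v => ∏ i, ∏ S, f i S (x i + Function.update y S₀ v S) :=
          expC_congr fun x _ => expC_piFinset_update B S₀ _
      _ = expC (Fintype.piFinset fun _ : Fin m => A) fun x =>
            expC A fun u =>
              expC (Fintype.piFinset fun _ : Finset (Fin m) => B) fun y =>
                expC B fun v =>
                  ∏ i, ∏ S, f i S (Function.update x i₀ u i + Function.update y S₀ v S) :=
          expC_piFinset_update A i₀ _
      _ = _ := expC_congr fun x _ => expC_comm A _ _
  rw [key]
  refine le_trans (norm_expC_le _ _) (expR_le_const hN0 fun x hx => ?_)
  refine le_trans (norm_expC_le _ _) (expR_le_const hN0 fun y hy => ?_)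
  set gg : (Fin n → ZMod p) → ℂ := fun u => ∏ S ∈ Finset.univ.erase S₀, f i₀ S (u + y S)
    with hgg
  set hh : (Fin n → ZMod p) → ℂ := fun v => ∏ i ∈ Finset.univ.erase i₀, f i S₀ (x i + v)
    with hhh
  set kk : ℂ := ∏ i ∈ Finset.univ.erase i₀, ∏ S ∈ Finset.univ.erase S₀, f i S (x i + y S)
    with hkk
  have hprod : ∀ u v,
      (∏ i, ∏ S, f i S (Function.update x i₀ u i + Function.update y S₀ v S))
        = (f i₀ S₀ (u + v) * gg u * hh v) * kk := by
    intro u v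
    rw [← Finset.mul_prod_erase Finset.univ _ (Finset.mem_univ i₀)]
    have h1 : (∏ S, f i₀ S (Function.update x i₀ u i₀ + Function.update y S₀ v S))
        = f i₀ S₀ (u + v) * gg u := by
      rw [← Finset.mul_prod_erase Finset.univ _ (Finset.mem_univ S₀)]
      simp only [Function.update_self]
      congr 1
      rw [hgg]
      refine Finset.prod_congr rfl fun S hS => ?_
      rw [Function.update_of_ne (Finset.mem_erase.1 hS).1]
    have h2 : (∏ i ∈ Finset.univ.erase i₀, ∏ S,
          f i S (Function.update x i₀ u i + Function.update y S₀ v S))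
        = hh v * kk := by
      rw [hhh, hkk, ← Finset.prod_mul_distrib]
      refine Finset.prod_congr rfl fun i hi => ?_
      rw [Function.update_of_ne (Finset.mem_erase.1 hi).1]
      rw [← Finset.mul_prod_erase Finset.univ _ (Finset.mem_univ S₀), Function.update_self]
      congr 1
      refine Finset.prod_congr rfl fun S hS => ?_
      rw [Function.update_of_ne (Finset.mem_erase.1 hS).1]
    rw [h1, h2]
    ring
  have hsplit : (expC A fun u => expC B fun v =>
      ∏ i, ∏ S, f i S (Function.update x i₀ u i + Function.update y S₀ v S))
      = (expC A fun u => expC B fun v => f i₀ S₀ (u + v) * gg u * hh v) * kk := by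
    rw [← expC_mul_const]
    refine expC_congr fun u _ => ?_
    rw [← expC_mul_const]
    exact expC_congr fun v _ => hprod u v
  have hgg1 : ∀ u, ‖gg u‖ ≤ 1 := fun u => by
    rw [hgg]
    calc ‖∏ S ∈ Finset.univ.erase S₀, f i₀ S (u + y S)‖
        = ∏ S ∈ Finset.univ.erase S₀, ‖f i₀ S (u + y S)‖ := norm_prod _ _
      _ ≤ 1 := Finset.prod_le_one (fun _ _ => norm_nonneg _) (fun S _ => hf _ _ _)
  have hhh1 : ∀ v, ‖hh v‖ ≤ 1 := fun v => by
    rw [hhh]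
    calc ‖∏ i ∈ Finset.univ.erase i₀, f i S₀ (x i + v)‖
        = ∏ i ∈ Finset.univ.erase i₀, ‖f i S₀ (x i + v)‖ := norm_prod _ _
      _ ≤ 1 := Finset.prod_le_one (fun _ _ => norm_nonneg _) (fun i _ => hf _ _ _)
  have hkk1 : ‖kk‖ ≤ 1 := by
    rw [hkk]
    calc ‖∏ i ∈ Finset.univ.erase i₀, ∏ S ∈ Finset.univ.erase S₀, f i S (x i + y S)‖
        = ∏ i ∈ Finset.univ.erase i₀, ‖∏ S ∈ Finset.univ.erase S₀, f i S (x i + y S)‖ :=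
          norm_prod _ _
      _ ≤ 1 := by
          refine Finset.prod_le_one (fun _ _ => norm_nonneg _) (fun i _ => ?_)
          calc ‖∏ S ∈ Finset.univ.erase S₀, f i S (x i + y S)‖
              = ∏ S ∈ Finset.univ.erase S₀, ‖f i S (x i + y S)‖ := norm_prod _ _
            _ ≤ 1 := Finset.prod_le_one (fun _ _ => norm_nonneg _) (fun S _ => hf _ _ _)
  rw [hsplit]
  calc ‖(expC A fun u => expC B fun v => f i₀ S₀ (u + v) * gg u * hh v) * kk‖
      = ‖expC A fun u => expC B fun v => f i₀ S₀ (u + v) * gg u * hh v‖ * ‖kk‖ :=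
        norm_mul _ _
    _ ≤ N * 1 := by
        refine mul_le_mul ?_ hkk1 (norm_nonneg _) hN0
        rw [hNval]
        exact norm_le_box_rpow A B _ gg hh hgg1 hhh1
    _ = N := mul_one N

end TW
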